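/- Let d, b ≥ 1, let x ∈ ℝ^d be nonzero, and let r ≥ 1. Consider a Count Sketch of x with r rows and b buckets: for each row j = 1,…,r draw a uniformly random hash h_j : {1,…,d} → {1,…,b} and uniformly random signs s_j : {1,…,d} → {−1,+1}, all random variables across all rows mutually independent; row j stores C_j(y) = Σ_{i : h_j(i)=y} s_j(i)·x_i and yields the row estimate x̂_i^{(j)} = s_j(i)·C_j(h_j(i)); the final estimate x̂_i is the median over j of x̂_i^{(j)}. Then for every coordinate i, P(|x̂_i − x_i| > √(3/b)·‖x‖₂) ≤ exp(−r/18). -/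

import Mathlib

open Finset

/-- The real-valued sign `±1` associated to a boolean. -/
def csSign (s : Bool) : ℝ := if s then 1 else -1

/-- A Count Sketch row: bucket `y` stores `∑_{i : h i = y} s i • x i`. -/
noncomputable def csRow {d b : ℕ} (x : EuclideanSpace ℝ (Fin d))
    (h : Fin d → Fin b) (s : Fin d → Bool) (y : Fin b) : ℝ :=
  ∑ i ∈ Finset.univ.filter (fun i => h i = y), csSign (s i) * x i

/-- The Count Sketch row point estimate of coordinate `i`: `s i • C (h i)`. -/
noncomputable def csEstimate {d b : ℕ} (x : EuclideanSpace ℝ (Fin d))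
    (h : Fin d → Fin b) (s : Fin d → Bool) (i : Fin d) : ℝ :=
  csSign (s i) * csRow x h s (h i)

/-- The sample median of `v : Fin r → ℝ`: the `⌈r/2⌉`-th order statistic. -/
noncomputable def sampleMedian {r : ℕ} (hr : 0 < r) (v : Fin r → ℝ) : ℝ :=
  v (Tuple.sort v ⟨(r + 1) / 2 - 1, by omega⟩)

/-- The `r`-row Count Sketch point estimate of coordinate `i`: the median over
the rows `j` of the row estimates `s_j i • C_j (h_j i)`. -/
noncomputable def csMedianEstimate {d b r : ℕ} (hr : 0 < r) (x : EuclideanSpace ℝ (Fin d))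
    (hs : Fin r → Fin d → Fin b) (ss : Fin r → Fin d → Bool) (i : Fin d) : ℝ :=
  sampleMedian hr fun j => csEstimate x (hs j) (ss j) i

/-! In a single row the error is `x̂ᵢ - xᵢ = sᵢ · ∑_{k ≠ i, h k = h i} s_k x_k`. Distinct signs are
orthogonal and a fixed `k ≠ i` collides with `i` with probability `1/b`, so the error has second
moment `∑_{k ≠ i} x_k² / b ≤ ‖x‖² / b`, and by Chebyshev a row is off by more than `√(3/b) ‖x‖`
with probability at most `1/3`. The median is that far off only if at least half of the `r`
independent rows are; the number `N` of bad rows has `E[2^N] ≤ (4/3)^r`, so Markov's inequality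
bounds this by `(4 / (3√2))^r ≤ exp(-r/18)`. -/

lemma csSign_mul_self (s : Bool) : csSign s * csSign s = 1 := by
  cases s <;> simp [csSign]

lemma csSign_not (s : Bool) : csSign (!s) = -csSign s := by
  cases s <;> simp [csSign]

section Signs

variable {ι : Type*} [Fintype ι] [DecidableEq ι]

lemma sum_csSign_mul_csSign_of_ne {k l : ι} (hkl : k ≠ l) :
    ∑ s : ι → Bool, csSign (s k) * csSign (s l) = 0 := by
  have hflip : Function.Involutive fun s : ι → Bool => Function.update s k (!s k) := by
    intro s; simp
  have h := Equiv.sum_comp hflip.toPerm fun s : ι → Bool => csSign (s k) * csSign (s l)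
  simp only [Function.Involutive.coe_toPerm, Function.update_self,
    Function.update_of_ne hkl.symm, csSign_not, neg_mul, Finset.sum_neg_distrib] at h
  linarith

lemma sum_csSign_mul_csSign (k l : ι) :
    ∑ s : ι → Bool, csSign (s k) * csSign (s l) = if k = l then 2 ^ Fintype.card ι else 0 := by
  split_ifs with hkl
  · simp [hkl, csSign_mul_self]
  · exact sum_csSign_mul_csSign_of_ne hkl

lemma sum_sq_sum_csSign_mul (T : Finset ι) (a : ι → ℝ) :
    ∑ s : ι → Bool, (∑ k ∈ T, csSign (s k) * a k) ^ 2 = 2 ^ Fintype.card ι * ∑ k ∈ T, a k ^ 2 := by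
  calc ∑ s : ι → Bool, (∑ k ∈ T, csSign (s k) * a k) ^ 2
      = ∑ k ∈ T, ∑ l ∈ T, a k * a l * ∑ s : ι → Bool, csSign (s k) * csSign (s l) := by
        simp_rw [sq, Finset.sum_mul_sum, Finset.mul_sum]
        rw [Finset.sum_comm]
        refine Finset.sum_congr rfl fun k _ => ?_
        rw [Finset.sum_comm]
        exact Finset.sum_congr rfl fun l _ => Finset.sum_congr rfl fun s _ => by ring
    _ = 2 ^ Fintype.card ι * ∑ k ∈ T, a k ^ 2 := by
        simp [sum_csSign_mul_csSign, Finset.mul_sum, sq, mul_comm]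

end Signs

lemma card_filter_apply_eq_apply_mul_card {ι β : Type*} [Fintype ι] [DecidableEq ι] [Fintype β]
    [DecidableEq β] {i k : ι} (hik : i ≠ k) :
    #{h : ι → β | h k = h i} * Fintype.card β = Fintype.card (ι → β) := by
  rw [Fintype.card_congr (Equiv.funSplitAt k β), Fintype.card_prod, mul_comm]
  congr 1
  calc #{h : ι → β | h k = h i}
      = #{p : β × ({j // j ≠ k} → β) | p.1 = p.2 ⟨i, hik⟩} :=
        Finset.card_equiv (Equiv.funSplitAt k β) (by simp)
    _ = #(univ : Finset ({j // j ≠ k} → β)) :=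
        Finset.card_nbij' Prod.snd (fun g => (g ⟨i, hik⟩, g)) (by simp) (by simp)
          (fun p hp => Prod.ext (Finset.mem_filter.mp hp).2.symm rfl) (fun _ _ => rfl)
    _ = Fintype.card ({j // j ≠ k} → β) := Finset.card_univ

lemma csEstimate_sub_self {d b : ℕ} (x : EuclideanSpace ℝ (Fin d)) (h : Fin d → Fin b)
    (s : Fin d → Bool) (i : Fin d) :
    csEstimate x h s i - x i =
      csSign (s i) * ∑ k ∈ univ.erase i with h k = h i, csSign (s k) * x k := by
  have hi : i ∈ univ.filter fun k => h k = h i := by simp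
  rw [csEstimate, csRow, ← Finset.add_sum_erase _ _ hi, Finset.filter_erase, mul_add,
    ← mul_assoc, csSign_mul_self, one_mul, add_sub_cancel_left]

lemma mul_sum_sq_csEstimate_sub_self {d b : ℕ} (x : EuclideanSpace ℝ (Fin d)) (i : Fin d) :
    (b : ℝ) * ∑ p : (Fin d → Fin b) × (Fin d → Bool), (csEstimate x p.1 p.2 i - x i) ^ 2 =
      Fintype.card ((Fin d → Fin b) × (Fin d → Bool)) * ∑ k ∈ univ.erase i, x k ^ 2 := by
  have hsigns : ∀ h : Fin d → Fin b, ∑ s : Fin d → Bool, (csEstimate x h s i - x i) ^ 2 =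
      2 ^ d * ∑ k ∈ univ.erase i, if h k = h i then x k ^ 2 else 0 := by
    intro h
    simp_rw [csEstimate_sub_self, mul_pow, sq (csSign _), csSign_mul_self, one_mul]
    rw [sum_sq_sum_csSign_mul, Fintype.card_fin, Finset.sum_filter]
  have hhash : ∀ k ∈ univ.erase i, (b : ℝ) * ∑ h : Fin d → Fin b,
      (if h k = h i then x k ^ 2 else 0) = b ^ d * x k ^ 2 := by
    intro k hk
    have hcard := card_filter_apply_eq_apply_mul_card (β := Fin b) (Finset.ne_of_mem_erase hk).symm
    rw [Fintype.card_fun, Fintype.card_fin, Fintype.card_fin] at hcard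
    rw [← Finset.sum_filter, Finset.sum_const, nsmul_eq_mul, ← mul_assoc, mul_comm (b : ℝ),
      ← Nat.cast_mul, hcard]
    push_cast
    ring
  rw [Fintype.sum_prod_type, Finset.sum_congr rfl fun h _ => hsigns h, ← Finset.mul_sum,
    Finset.sum_comm, Finset.mul_sum, Finset.mul_sum, Finset.mul_sum,
    Finset.sum_congr rfl fun k hk => by rw [mul_left_comm, hhash k hk]]
  simp only [Fintype.card_prod, Fintype.card_fun, Fintype.card_fin, Fintype.card_bool]
  push_cast
  exact Finset.sum_congr rfl fun k _ => by ring

lemma card_filter_lt_abs_mul_sq_le {A : Type*} [Fintype A] (f : A → ℝ) {t : ℝ} (ht : 0 ≤ t) :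
    #{a | t < |f a|} * t ^ 2 ≤ ∑ a, f a ^ 2 := by
  calc #{a | t < |f a|} * t ^ 2 ≤ ∑ a ∈ univ with t < |f a|, f a ^ 2 := by
        rw [← nsmul_eq_mul]
        refine Finset.card_nsmul_le_sum _ _ _ fun a ha => ?_
        rw [← sq_abs (f a)]
        exact pow_le_pow_left₀ ht (Finset.mem_filter.mp ha).2.le 2
    _ ≤ ∑ a, f a ^ 2 :=
        Finset.sum_le_sum_of_subset_of_nonneg (Finset.filter_subset _ _) fun a _ _ => sq_nonneg _

lemma three_mul_card_csEstimate_far_le {d b : ℕ} (hb : 1 ≤ b) (x : EuclideanSpace ℝ (Fin d))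
    (hx : x ≠ 0) (i : Fin d) :
    3 * #{p : (Fin d → Fin b) × (Fin d → Bool) |
        √(3 / b) * ‖x‖ < |csEstimate x p.1 p.2 i - x i|} ≤
      Fintype.card ((Fin d → Fin b) × (Fin d → Bool)) := by
  set t := √(3 / b) * ‖x‖
  have hb0 : (0 : ℝ) < b := by exact_mod_cast hb
  have hx0 : 0 < ‖x‖ ^ 2 := by positivity
  have ht : (b : ℝ) * t ^ 2 = 3 * ‖x‖ ^ 2 := by
    rw [mul_pow, Real.sq_sqrt (by positivity)]
    field_simp
  have hrest : ∑ k ∈ univ.erase i, x k ^ 2 ≤ ‖x‖ ^ 2 := by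
    rw [EuclideanSpace.norm_sq_eq, Finset.sum_erase_eq_sub (Finset.mem_univ i)]
    simp only [Real.norm_eq_abs, sq_abs]
    linarith [sq_nonneg (x i)]
  have hcheb := card_filter_lt_abs_mul_sq_le (fun p : (Fin d → Fin b) × (Fin d → Bool) =>
    csEstimate x p.1 p.2 i - x i) (by positivity : 0 ≤ t)
  have key : 3 * (#{p : (Fin d → Fin b) × (Fin d → Bool) |
        t < |csEstimate x p.1 p.2 i - x i|} : ℝ) * ‖x‖ ^ 2 ≤
      Fintype.card ((Fin d → Fin b) × (Fin d → Bool)) * ‖x‖ ^ 2 := by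
    calc _ = (b : ℝ) * (#{p : (Fin d → Fin b) × (Fin d → Bool) |
          t < |csEstimate x p.1 p.2 i - x i|} * t ^ 2) := by rw [mul_left_comm, ht]; ring
      _ ≤ (b : ℝ) * ∑ p : (Fin d → Fin b) × (Fin d → Bool), (csEstimate x p.1 p.2 i - x i) ^ 2 :=
        mul_le_mul_of_nonneg_left hcheb hb0.le
      _ = _ := mul_sum_sq_csEstimate_sub_self x i
      _ ≤ _ := by gcongr
  exact_mod_cast le_of_mul_le_mul_right key hx0

section OrderStatistics

variable {α : Type*} [LinearOrder α] {r : ℕ} (v : Fin r → α) (m : Fin r)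

lemma sub_le_card_filter_lt_of_lt_apply_sort {a : α} (h : a < v (Tuple.sort v m)) :
    r - m ≤ #{j | a < v j} := by
  have hsub : (Finset.Ici m).image (Tuple.sort v) ⊆ ({j | a < v j} : Finset (Fin r)) := by
    simp only [Finset.subset_iff, Finset.mem_image, Finset.mem_Ici, Finset.mem_filter,
      Finset.mem_univ, true_and, forall_exists_index, and_imp]
    rintro _ p hmp rfl
    exact h.trans_le (Tuple.monotone_sort v hmp)
  simpa [Finset.card_image_of_injective _ (Tuple.sort v).injective] using Finset.card_le_card hsub

lemma succ_le_card_filter_lt_of_apply_sort_lt {a : α} (h : v (Tuple.sort v m) < a) :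
    m + 1 ≤ #{j | v j < a} := by
  have hsub : (Finset.Iic m).image (Tuple.sort v) ⊆ ({j | v j < a} : Finset (Fin r)) := by
    simp only [Finset.subset_iff, Finset.mem_image, Finset.mem_Iic, Finset.mem_filter,
      Finset.mem_univ, true_and, forall_exists_index, and_imp]
    rintro _ p hpm rfl
    exact (Tuple.monotone_sort v hpm).trans_lt h
  simpa [Finset.card_image_of_injective _ (Tuple.sort v).injective] using Finset.card_le_card hsub

end OrderStatistics

lemma le_two_mul_card_filter_of_lt_abs_sampleMedian_sub {r : ℕ} (hr : 0 < r) (v : Fin r → ℝ)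
    {c t : ℝ} (hmed : t < |sampleMedian hr v - c|) :
    r ≤ 2 * #{j | t < |v j - c|} := by
  rcases lt_abs.mp hmed with hhigh | hlow
  · have hfar := sub_le_card_filter_lt_of_lt_apply_sort v _
      (by linarith : c + t < sampleMedian hr v)
    have hsub : #{j | c + t < v j} ≤ #{j | t < |v j - c|} := Finset.card_le_card <|
      Finset.monotone_filter_right _ fun j _ hj => lt_abs.mpr (.inl (by linarith))
    simp only at hfar
    omega
  · have hfar := succ_le_card_filter_lt_of_apply_sort_lt v _
      (by linarith : sampleMedian hr v < c - t)
    have hsub : #{j | v j < c - t} ≤ #{j | t < |v j - c|} := Finset.card_le_card <|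
      Finset.monotone_filter_right _ fun j _ hj => lt_abs.mpr (.inr (by linarith))
    simp only at hfar
    omega

lemma sum_two_pow_card_filter {A : Type*} [Fintype A] (P : A → Prop) [DecidablePred P] (r : ℕ) :
    ∑ ω : Fin r → A, 2 ^ #{j | P (ω j)} = (Fintype.card A + #{a | P a}) ^ r := by
  have hprod : ∀ ω : Fin r → A, 2 ^ #{j | P (ω j)} = ∏ j, if P (ω j) then 2 else 1 := by
    intro ω
    rw [Finset.prod_ite, Finset.prod_const, Finset.prod_const_one, mul_one]
  have hrow : ∑ a : A, (if P a then 2 else 1) = Fintype.card A + #{a | P a} := by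
    have hsplit := Finset.card_filter_add_card_filter_not (s := univ) P
    rw [Finset.card_univ] at hsplit
    rw [Finset.sum_ite, Finset.sum_const, Finset.sum_const, smul_eq_mul, smul_eq_mul, mul_one]
    grind
  simp_rw [hprod, ← Fintype.prod_sum (fun (_ : Fin r) (a : A) => if P a then 2 else 1), hrow,
    Finset.prod_const, Finset.card_univ, Fintype.card_fin]

lemma four_thirds_le_sqrt_two_mul_exp : (4 / 3 : ℝ) ≤ √2 * Real.exp (-1 / 18) := by
  refine le_of_pow_le_pow_left₀ two_ne_zero (by positivity) ?_
  rw [mul_pow, Real.sq_sqrt zero_le_two, ← Real.exp_nat_mul]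
  nlinarith [Real.add_one_le_exp ((2 : ℕ) * (-1 / 18 : ℝ))]

lemma card_filter_le_two_mul_card_filter_le_exp {A : Type*} [Fintype A] (P : A → Prop)
    [DecidablePred P] (hP : 3 * #{a | P a} ≤ Fintype.card A) (r : ℕ) :
    (#{ω : Fin r → A | r ≤ 2 * #{j | P (ω j)}} : ℝ) ≤
      Real.exp (-r / 18) * Fintype.card A ^ r := by
  have hmarkov : (#{ω : Fin r → A | r ≤ 2 * #{j | P (ω j)}} : ℝ) * √2 ^ r ≤
      ∑ ω : Fin r → A, (2 : ℝ) ^ #{j | P (ω j)} := by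
    rw [← nsmul_eq_mul]
    refine (Finset.card_nsmul_le_sum _ _ _ fun ω hω => ?_).trans
      (Finset.sum_le_sum_of_subset_of_nonneg (Finset.filter_subset _ _) fun _ _ _ => by positivity)
    calc √2 ^ r ≤ √2 ^ (2 * #{j | P (ω j)}) :=
          pow_le_pow_right₀ (Real.one_le_sqrt.mpr one_le_two) (Finset.mem_filter.mp hω).2
      _ = 2 ^ #{j | P (ω j)} := by rw [pow_mul, Real.sq_sqrt zero_le_two]
  have hsum : ∑ ω : Fin r → A, (2 : ℝ) ^ #{j | P (ω j)} ≤ (4 / 3 * Fintype.card A) ^ r := by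
    have hP' : (3 * #{a | P a} : ℝ) ≤ Fintype.card A := by exact_mod_cast hP
    calc ∑ ω : Fin r → A, (2 : ℝ) ^ #{j | P (ω j)} = ((Fintype.card A + #{a | P a} : ℕ) : ℝ) ^ r :=
          by exact_mod_cast sum_two_pow_card_filter P r
      _ ≤ (4 / 3 * Fintype.card A) ^ r := by
          push_cast
          gcongr
          linarith
  have hbase : (4 / 3 * Fintype.card A : ℝ) ^ r ≤
      Real.exp (-r / 18) * Fintype.card A ^ r * √2 ^ r := by
    calc (4 / 3 * Fintype.card A : ℝ) ^ r ≤ (√2 * Real.exp (-1 / 18) * Fintype.card A) ^ r := by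
          gcongr
          exact four_thirds_le_sqrt_two_mul_exp
      _ = _ := by
          rw [mul_pow, mul_pow, ← Real.exp_nat_mul]
          ring_nf
  exact le_of_mul_le_mul_right (hmarkov.trans (hsum.trans hbase)) (by positivity)

open scoped Classical in
theorem countSketch_point_query_general (d b r : ℕ) (hb : 1 ≤ b) (hr : 0 < r)
    (x : EuclideanSpace ℝ (Fin d)) (hx : x ≠ 0) (i : Fin d) :
    ((Finset.univ.filter
          (fun p : (Fin r → Fin d → Fin b) × (Fin r → Fin d → Bool) =>
            Real.sqrt (3 / b) * ‖x‖ < |csMedianEstimate hr x p.1 p.2 i - x i|)).card : ℝ) /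
        (Fintype.card ((Fin r → Fin d → Fin b) × (Fin r → Fin d → Bool)) : ℝ)
      ≤ Real.exp (-(r : ℝ) / 18) := by
  let far : (Fin d → Fin b) × (Fin d → Bool) → Prop :=
    fun p => Real.sqrt (3 / b) * ‖x‖ < |csEstimate x p.1 p.2 i - x i|
  let rows := Equiv.arrowProdEquivProdArrow (Fin r) (fun _ => Fin d → Fin b) (fun _ => Fin d → Bool)
  have hmedian : #{p : (Fin r → Fin d → Fin b) × (Fin r → Fin d → Bool) |
      Real.sqrt (3 / b) * ‖x‖ < |csMedianEstimate hr x p.1 p.2 i - x i|} ≤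
      #{ω : Fin r → (Fin d → Fin b) × (Fin d → Bool) | r ≤ 2 * #{j | far (ω j)}} := by
    refine Finset.card_le_card_of_injOn rows.symm (fun p hp => ?_) rows.symm.injective.injOn
    exact Finset.mem_filter.mpr ⟨Finset.mem_univ _,
      le_two_mul_card_filter_of_lt_abs_sampleMedian_sub hr _ (Finset.mem_filter.mp hp).2⟩
  have hcard : Fintype.card ((Fin r → Fin d → Fin b) × (Fin r → Fin d → Bool)) =
      Fintype.card ((Fin d → Fin b) × (Fin d → Bool)) ^ r := by
    rw [← Fintype.card_congr rows, Fintype.card_fun, Fintype.card_fin]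
  refine div_le_of_le_mul₀ (by positivity) (by positivity) ?_
  rw [hcard, Nat.cast_pow]
  exact (Nat.cast_le.mpr hmedian).trans <| card_filter_le_two_mul_card_filter_le_exp far
    (three_mul_card_csEstimate_far_le hb x hx i) r

open scoped Classical in
/-- Count Sketch `ℓ₂` point-query guarantee for a single coordinate: over
uniformly random, mutually independent hashes and signs for the `r` rows, the
median estimate `x̂ i` satisfies `P(|x̂ i - x i| > √(3/b) ‖x‖₂) ≤ exp (-r/18)`. -/
theorem countSketch_point_query (d b r : ℕ) (hd : 1 ≤ d) (hb : 1 ≤ b) (hr : 0 < r)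
    (x : EuclideanSpace ℝ (Fin d)) (hx : x ≠ 0) (i : Fin d) :
    ((Finset.univ.filter
          (fun p : (Fin r → Fin d → Fin b) × (Fin r → Fin d → Bool) =>
            Real.sqrt (3 / b) * ‖x‖ < |csMedianEstimate hr x p.1 p.2 i - x i|)).card : ℝ) /
        (Fintype.card ((Fin r → Fin d → Fin b) × (Fin r → Fin d → Bool)) : ℝ)
      ≤ Real.exp (-(r : ℝ) / 18) :=
  countSketch_point_query_general d b r hb hr x hx i
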